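/- arXiv:1811.04251 — 5 statements merged into one kernel-verified Lean document; each statement's English description precedes it below -/
import Mathlib

section
/- Let p and q be probability distributions on a finite set X with q having full support, and let f : X → ℝ be any function. Then KL(p‖q) ≥ E_{x∼p}[f(x)] − ln E_{x∼q}[e^{f(x)}]. -/
open Real

/-- Donsker–Varadhan lower bound on KL divergence. -/
theorem donsker_varadhan_lower_bound {X : Type*} [Fintype X]
    (p q : X → ℝ) (hp0 : ∀ x, 0 ≤ p x) (hp1 : ∑ x, p x = 1)
    (hq0 : ∀ x, 0 < q x) (hq1 : ∑ x, q x = 1) (f : X → ℝ) :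
    ∑ x, p x * Real.log (p x / q x) ≥
      (∑ x, p x * f x) - Real.log (∑ x, q x * Real.exp (f x)) := by
  have hX : Nonempty X := by
    by_contra h
    rw [not_nonempty_iff] at h
    rw [Finset.univ_eq_empty, Finset.sum_empty] at hp1
    exact one_ne_zero hp1.symm
  set Z : ℝ := ∑ x, q x * Real.exp (f x) with hZ
  have hZpos : 0 < Z := Finset.sum_pos (fun x _ => mul_pos (hq0 x) (Real.exp_pos _))
    Finset.univ_nonempty
  set r : X → ℝ := fun x => q x * Real.exp (f x) / Z with hr
  have hrpos : ∀ x, 0 < r x := fun x => div_pos (mul_pos (hq0 x) (Real.exp_pos _)) hZpos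
  have hrsum : ∑ x, r x = 1 := by
    simp only [hr, div_eq_mul_inv, ← Finset.sum_mul]
    rw [← hZ, mul_inv_cancel₀ hZpos.ne']
  -- key: gap equals KL(p‖r)
  have key : ∑ x, p x * Real.log (p x / q x) - ((∑ x, p x * f x) - Real.log Z)
      = ∑ x, p x * Real.log (p x / r x) := by
    have : ∑ x, p x * Real.log (p x / r x)
        = ∑ x, (p x * Real.log (p x / q x) - p x * f x + p x * Real.log Z) := by
      apply Finset.sum_congr rfl
      intro x _
      rcases eq_or_lt_of_le (hp0 x) with h0 | hpx
      · simp [← h0]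
      · have : Real.log (p x / r x) = Real.log (p x / q x) - f x + Real.log Z := by
          rw [hr]
          rw [Real.log_div hpx.ne' (hrpos x).ne', Real.log_div hpx.ne' (hq0 x).ne',
            Real.log_div (mul_pos (hq0 x) (Real.exp_pos _)).ne' hZpos.ne',
            Real.log_mul (hq0 x).ne' (Real.exp_pos _).ne', Real.log_exp]
          ring
        rw [this]; ring
    rw [this, Finset.sum_add_distrib, Finset.sum_sub_distrib, ← Finset.sum_mul, hp1]
    ring
  have gibbs : 0 ≤ ∑ x, p x * Real.log (p x / r x) := by
    have hpt : ∀ x, p x - r x ≤ p x * Real.log (p x / r x) := by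
      intro x
      rcases eq_or_lt_of_le (hp0 x) with h0 | hpx
      · simp [← h0]; exact (hrpos x).le
      · have h1 : Real.log (r x / p x) ≤ r x / p x - 1 :=
          Real.log_le_sub_one_of_pos (div_pos (hrpos x) hpx)
        have h2 : Real.log (p x / r x) = - Real.log (r x / p x) := by
          rw [← Real.log_inv, inv_div]
        rw [h2]
        have := mul_le_mul_of_nonneg_left h1 (hp0 x)
        have h3 : p x * (r x / p x - 1) = r x - p x := by
          field_simp
        nlinarith
    calc (0:ℝ) = ∑ x, (p x - r x) := by rw [Finset.sum_sub_distrib, hp1, hrsum]; ring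
    _ ≤ _ := Finset.sum_le_sum fun x _ => hpt x
  linarith
end

section
/- Let p and q be probability distributions on a finite set, q with full support, N ≥ 2, and q̃ = (1−1/N)q + (1/N)p. For any event E on N-tuples, Pr_{S∼q^N}(E) ≥ 1 − Pr_{S∼q̃^N}(¬E) / (1 − 1/N)^N; in particular if Pr_{S∼q̃^N}(E) ≥ 1 − δ then Pr_{S∼q^N}(E) ≥ 1 − 4δ. -/
open MeasureTheory ENNReal

/-!
Since `(1 - 1/N) • q ≤ q̃`, the product measure `q̃^N` dominates `(1 - 1/N)^N • q^N`: this is the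
coupling in which every coordinate is drawn from `q` with probability `1 - 1/N`. Hence
`Pr_{q^N}(¬E) ≤ Pr_{q̃^N}(¬E) / (1 - 1/N)^N`, and `(1 - 1/N)^N ≥ 1/4` gives the factor `4`.
-/

theorem one_quarter_le_one_sub_one_div_pow {n : ℕ} (hn : 2 ≤ n) :
    1 / 4 ≤ (1 - 1 / (n : ℝ)) ^ n := by
  have hn' : (2 : ℝ) ≤ n := by exact_mod_cast hn
  have hroot : (1 / 2 : ℝ) ^ (2 / (n : ℝ)) ≤ 1 - 1 / n := by
    have h := rpow_one_add_le_one_add_mul_self (s := -1 / 2) (by norm_num)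
      (p := 2 / (n : ℝ)) (by positivity) (by rw [div_le_one (by linarith)]; exact hn')
    convert h using 2 <;> ring
  calc (1 / 4 : ℝ) = ((1 / 2 : ℝ) ^ (2 / (n : ℝ))) ^ n := by
        rw [← Real.rpow_mul_natCast (by norm_num), div_mul_cancel₀ _ (by positivity)]
        norm_num
    _ ≤ (1 - 1 / (n : ℝ)) ^ n := pow_le_pow_left₀ (by positivity) hroot n

namespace MeasureTheory.Measure

variable {ι : Type*} [Fintype ι] {α : ι → Type*} [∀ i, MeasurableSpace (α i)]

theorem pi_mono {μ ν : ∀ i, Measure (α i)} (h : ∀ i, μ i ≤ ν i) :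
    Measure.pi μ ≤ Measure.pi ν := by
  have houter : OuterMeasure.pi (fun i => (μ i).toOuterMeasure)
      ≤ OuterMeasure.pi (fun i => (ν i).toOuterMeasure) :=
    OuterMeasure.le_pi.mpr fun t _ => (OuterMeasure.pi_pi_le _ t).trans <|
      Finset.prod_le_prod' fun i _ => h i (t i)
  refine Measure.le_iff.2 fun s hs => ?_
  simp only [Measure.pi, toMeasure_apply _ _ hs]
  exact houter s

theorem pi_smul (c : ι → ℝ≥0∞) (hc : ∀ i, c i ≠ ∞) (μ : ∀ i, Measure (α i))
    [∀ i, SigmaFinite (μ i)] :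
    Measure.pi (fun i => c i • μ i) = (∏ i, c i) • Measure.pi μ := by
  have : ∀ i, SigmaFinite (c i • μ i) := fun i => by
    rw [← ENNReal.coe_toNNReal (hc i), ← ENNReal.smul_def]; infer_instance
  refine pi_eq fun s _ => ?_
  simp [Finset.prod_mul_distrib]

theorem pow_card_smul_pi_le_pi {ι β : Type*} [Fintype ι] [MeasurableSpace β] {c : ℝ≥0∞}
    (hc : c ≠ ∞) {μ ν : Measure β} [SigmaFinite μ] (h : c • μ ≤ ν) :
    c ^ Fintype.card ι • Measure.pi (fun _ : ι => μ) ≤ Measure.pi (fun _ : ι => ν) := by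
  rw [← Finset.card_univ, ← Finset.prod_const, ← pi_smul _ (fun _ => hc)]
  exact pi_mono fun _ => h

end MeasureTheory.Measure

namespace MeasureTheory

variable {α : Type*} [MeasurableSpace α]

theorem isProbabilityMeasure_one_sub_smul_add_smul {t : ℝ≥0∞} (ht : t ≤ 1) (μ ν : Measure α)
    [IsProbabilityMeasure μ] [IsProbabilityMeasure ν] :
    IsProbabilityMeasure ((1 - t) • μ + t • ν) :=
  ⟨by simp [tsub_add_cancel_of_le ht]⟩

theorem one_sub_div_le_of_smul_le {c : ℝ≥0∞} (hc : 0 < c.toReal) {μ ν : Measure α}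
    [IsProbabilityMeasure μ] [IsFiniteMeasure ν] (h : c • μ ≤ ν) {s : Set α}
    (hs : MeasurableSet s) :
    1 - (ν sᶜ).toReal / c.toReal ≤ (μ s).toReal := by
  have hcompl : c.toReal * (1 - (μ s).toReal) ≤ (ν sᶜ).toReal := by
    have := ENNReal.toReal_mono (measure_ne_top ν _) (h sᶜ)
    rwa [Measure.smul_apply, smul_eq_mul, ENNReal.toReal_mul, ← measureReal_def,
      probReal_compl_eq_one_sub hs, measureReal_def] at this
  rw [sub_le_comm, le_div_iff₀ hc]
  linarith

end MeasureTheory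

theorem mixture_coupling_general {X : Type*} [MeasurableSpace X]
    (p q : Measure X) [IsProbabilityMeasure p] [IsProbabilityMeasure q]
    (N : ℕ) (hN : 2 ≤ N)
    (qt : Measure X)
    (hqt : qt = (1 - 1 / (N : ℝ≥0∞)) • q + (1 / (N : ℝ≥0∞)) • p)
    (E : Set (Fin N → X)) (hE : MeasurableSet E) (δ : ℝ) :
    ((Measure.pi fun _ : Fin N => q) E).toReal ≥
        1 - ((Measure.pi fun _ : Fin N => qt) Eᶜ).toReal /
          (1 - 1 / (N : ℝ)) ^ N ∧
      (((Measure.pi fun _ : Fin N => qt) E).toReal ≥ 1 - δ →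
        ((Measure.pi fun _ : Fin N => q) E).toReal ≥ 1 - 4 * δ) := by
  have hN1 : 1 / (N : ℝ≥0∞) ≤ 1 :=
    ENNReal.div_le_of_le_mul (by rw [one_mul]; exact_mod_cast (by omega : 1 ≤ N))
  have : IsProbabilityMeasure qt := hqt ▸ isProbabilityMeasure_one_sub_smul_add_smul hN1 q p
  have hcR : ((1 - 1 / (N : ℝ≥0∞)) ^ N).toReal = (1 - 1 / (N : ℝ)) ^ N := by
    rw [ENNReal.toReal_pow, ENNReal.toReal_sub_of_le hN1 one_ne_top]
    simp
  have hquarter := one_quarter_le_one_sub_one_div_pow hN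
  have hsmul : (1 - 1 / (N : ℝ≥0∞)) • q ≤ qt := hqt ▸ Measure.le_add_right le_rfl
  have hpi := Measure.pow_card_smul_pi_le_pi (ι := Fin N)
    (ENNReal.sub_ne_top one_ne_top) hsmul
  rw [Fintype.card_fin] at hpi
  have hbound := one_sub_div_le_of_smul_le (by rw [hcR]; linarith) hpi hE
  rw [hcR] at hbound
  refine ⟨hbound, fun hδ => ?_⟩
  have hcompl : ((Measure.pi fun _ : Fin N => qt) Eᶜ).toReal ≤ δ := by
    rw [← measureReal_def, probReal_compl_eq_one_sub hE, measureReal_def]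
    linarith
  have : ((Measure.pi fun _ : Fin N => qt) Eᶜ).toReal / (1 - 1 / (N : ℝ)) ^ N ≤ 4 * δ := by
    rw [div_le_iff₀ (by linarith)]
    nlinarith [ENNReal.toReal_nonneg (a := (Measure.pi fun _ : Fin N => qt) Eᶜ)]
  linarith

/-- Coupling argument: for the mixture `q̃ = (1-1/N) q + (1/N) p`,
`Pr_{q^N}(E) ≥ 1 − Pr_{q̃^N}(¬E) / (1−1/N)^N`; in particular, if
`Pr_{q̃^N}(E) ≥ 1 − δ` then `Pr_{q^N}(E) ≥ 1 − 4δ`. -/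
theorem mixture_coupling {X : Type*} [Fintype X] [MeasurableSpace X]
    [MeasurableSingletonClass X]
    (p q : Measure X) [IsProbabilityMeasure p] [IsProbabilityMeasure q]
    (hq : ∀ x : X, q {x} ≠ 0) (N : ℕ) (hN : 2 ≤ N)
    (qt : Measure X)
    (hqt : qt = (1 - 1 / (N : ℝ≥0∞)) • q + (1 / (N : ℝ≥0∞)) • p)
    (E : Set (Fin N → X)) (hE : MeasurableSet E) (δ : ℝ) :
    ((Measure.pi fun _ : Fin N => q) E).toReal ≥
        1 - ((Measure.pi fun _ : Fin N => qt) Eᶜ).toReal /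
          (1 - 1 / (N : ℝ)) ^ N ∧
      (((Measure.pi fun _ : Fin N => qt) E).toReal ≥ 1 - δ →
        ((Measure.pi fun _ : Fin N => q) E).toReal ≥ 1 - 4 * δ) :=
  mixture_coupling_general p q N hN qt hqt E hE δ
end

section
/- (Limitation on KL lower bounds) Let B be any function mapping a distribution p on a finite set X, a multiset S of N ≥ 2 elements of X, and δ ∈ (0,1) to a real number, such that for all distributions p, q on X with full support, Pr_{S∼q^N}( KL(p‖q) ≥ B(p, S, δ) ) ≥ 1 − δ. Then for any such p and q, Pr_{S∼q^N}( B(p, S, δ) ≤ ln N ) ≥ 1 − 4δ. -/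
/-!
Mix the sampling distribution with the target: `q' = (1 - 1/N) q + (1/N) p` has full support and
`q' ≥ p / N` pointwise, so `KL(p ‖ q') ≤ ln N`, and the premise applied to `(p, q')` says the bound
`B` is at most `ln N` with `q'^N`-probability at least `1 - δ`. Since `q' ≥ (1 - 1/N) q`, the
product measures satisfy `q'^N ≥ (1 - 1/N)^N q^N ≥ q^N / 4`, so the failure probability under
`q^N` is at most `4δ`.
-/

open MeasureTheory
open scoped ENNReal

lemma inv_four_le_one_sub_inv_pow {N : ℕ} (hN : 2 ≤ N) : (4 : ℝ)⁻¹ ≤ (1 - (N : ℝ)⁻¹) ^ N := by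
  have hN' : (2 : ℝ) ≤ N := by exact_mod_cast hN
  have hinv : (N : ℝ)⁻¹ ≤ 1 := inv_le_one_of_one_le₀ (by linarith)
  -- Bernoulli's inequality with the real exponent `N / 2 ≥ 1`
  have hhalf : (2 : ℝ)⁻¹ ≤ (1 - (N : ℝ)⁻¹) ^ ((N : ℝ) / 2) := by
    convert one_add_mul_self_le_rpow_one_add (s := -(N : ℝ)⁻¹) (by linarith)
      (p := (N : ℝ) / 2) (by linarith) using 1
    · field_simp; ring
    · ring_nf
  calc (4 : ℝ)⁻¹ = ((2 : ℝ)⁻¹) ^ 2 := by norm_num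
    _ ≤ ((1 - (N : ℝ)⁻¹) ^ ((N : ℝ) / 2)) ^ 2 := by gcongr
    _ = (1 - (N : ℝ)⁻¹) ^ N := by
      rw [← Real.rpow_natCast _ 2, ← Real.rpow_mul (by linarith), ← Real.rpow_natCast]
      norm_num

lemma ENNReal.inv_four_le_one_sub_inv_pow {N : ℕ} (hN : 2 ≤ N) :
    (4 : ℝ≥0∞)⁻¹ ≤ (1 - (N : ℝ≥0∞)⁻¹) ^ N := by
  have hinv : (N : ℝ)⁻¹ ≤ 1 := inv_le_one_of_one_le₀ (by exact_mod_cast by omega)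
  rw [← ENNReal.ofReal_natCast, ← ENNReal.ofReal_inv_of_pos (by positivity), ← ENNReal.ofReal_one,
    ← ENNReal.ofReal_sub _ (by positivity), ← ENNReal.ofReal_pow (sub_nonneg.2 hinv),
    ← ENNReal.ofReal_ofNat 4, ← ENNReal.ofReal_inv_of_pos (by norm_num)]
  exact ENNReal.ofReal_le_ofReal (_root_.inv_four_le_one_sub_inv_pow hN)

lemma sum_mul_log_div_le_log_inv {ι : Type*} (s : Finset ι) {p q : ι → ℝ} {t : ℝ} (ht : 0 < t)
    (hp : ∀ i ∈ s, 0 ≤ p i) (hp1 : ∑ i ∈ s, p i = 1) (hpq : ∀ i ∈ s, t * p i ≤ q i) :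
    ∑ i ∈ s, p i * Real.log (p i / q i) ≤ Real.log t⁻¹ := by
  calc ∑ i ∈ s, p i * Real.log (p i / q i) ≤ ∑ i ∈ s, p i * Real.log t⁻¹ := by
        refine Finset.sum_le_sum fun i hi => ?_
        rcases (hp i hi).eq_or_lt with hpi | hpi
        · simp [← hpi]
        have hqi : 0 < q i := (mul_pos ht hpi).trans_le (hpq i hi)
        gcongr
        rw [div_le_iff₀ hqi, le_inv_mul_iff₀ ht]
        exact hpq i hi
    _ = Real.log t⁻¹ := by rw [← Finset.sum_mul, hp1, one_mul]

namespace MeasureTheory.Measure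

lemma le_of_forall_singleton_le {α : Type*} [MeasurableSpace α] [Countable α]
    [MeasurableSingletonClass α] {μ ν : Measure α} (h : ∀ a, μ {a} ≤ ν {a}) : μ ≤ ν :=
  le_iff.2 fun s hs => by
    rw [← tsum_indicator_apply_singleton μ s hs, ← tsum_indicator_apply_singleton ν s hs]
    exact ENNReal.tsum_le_tsum fun a => Set.indicator_le_indicator (h a)

lemma smul_pi_le_pi {ι : Type*} [Fintype ι] {α : ι → Type*} [∀ i, MeasurableSpace (α i)]
    [∀ i, Countable (α i)] [∀ i, MeasurableSingletonClass (α i)]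
    {μ ν : ∀ i, Measure (α i)} [∀ i, SigmaFinite (μ i)] [∀ i, SigmaFinite (ν i)] {c : ℝ≥0∞}
    (h : ∀ i, c • μ i ≤ ν i) : c ^ Fintype.card ι • Measure.pi μ ≤ Measure.pi ν :=
  le_of_forall_singleton_le fun x => by
    rw [smul_apply, pi_singleton, pi_singleton, smul_eq_mul, ← Finset.card_univ,
      ← Finset.prod_const, ← Finset.prod_mul_distrib]
    exact Finset.prod_le_prod' fun i _ => h i {x i}

end MeasureTheory.Measure

lemma MeasureTheory.ofReal_one_sub_le_iff_measure_compl_le {Ω : Type*} [MeasurableSpace Ω]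
    {μ : Measure Ω} [IsProbabilityMeasure μ] {s : Set Ω} (hs : MeasurableSet s) {ε : ℝ}
    (hε : 0 ≤ ε) : ENNReal.ofReal (1 - ε) ≤ μ s ↔ μ sᶜ ≤ ENNReal.ofReal ε := by
  rw [prob_compl_eq_one_sub hs, ENNReal.ofReal_sub _ hε, ENNReal.ofReal_one, tsub_le_iff_tsub_le]

namespace PMF

variable {α : Type*} [Fintype α]

lemma sum_coe_eq_one (p : PMF α) : ∑ a, p a = 1 := by
  rw [← tsum_fintype (L := SummationFilter.unconditional α)]
  exact p.tsum_coe

lemma sum_toReal_eq_one (p : PMF α) : ∑ a, (p a).toReal = 1 := by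
  rw [← ENNReal.toReal_sum fun a _ => p.apply_ne_top a, p.sum_coe_eq_one, ENNReal.toReal_one]

noncomputable def mix (t : ℝ≥0∞) (ht : t ≤ 1) (p q : PMF α) : PMF α :=
  ofFintype (fun a => t * p a + (1 - t) * q a) <| by
    rw [Finset.sum_add_distrib, ← Finset.mul_sum, ← Finset.mul_sum, sum_coe_eq_one,
      sum_coe_eq_one, mul_one, mul_one]
    exact add_tsub_cancel_of_le ht

variable {t : ℝ≥0∞} (ht : t ≤ 1) (p q : PMF α)

lemma mix_apply (a : α) : p.mix t ht q a = t * p a + (1 - t) * q a := rfl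

lemma mix_ne_zero (ht0 : t ≠ 0) {a : α} (hp : p a ≠ 0) : p.mix t ht q a ≠ 0 :=
  ((ENNReal.mul_pos ht0 hp).trans_le le_self_add).ne'

lemma sum_mul_log_div_mix_le (ht0 : t ≠ 0) :
    ∑ a, (p a).toReal * Real.log ((p a).toReal / (p.mix t ht q a).toReal) ≤
      Real.log t.toReal⁻¹ :=
  sum_mul_log_div_le_log_inv _ (ENNReal.toReal_pos ht0 (ht.trans_lt ENNReal.one_lt_top).ne)
    (fun _ _ => ENNReal.toReal_nonneg) p.sum_toReal_eq_one fun a _ => by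
      rw [← ENNReal.toReal_mul]
      exact ENNReal.toReal_mono ((p.mix t ht q).apply_ne_top a) le_self_add

lemma smul_toMeasure_le_toMeasure_mix [MeasurableSpace α] [MeasurableSingletonClass α] :
    (1 - t) • q.toMeasure ≤ (p.mix t ht q).toMeasure :=
  Measure.le_of_forall_singleton_le fun a => by
    rw [Measure.smul_apply, toMeasure_apply_singleton _ _ (measurableSet_singleton a),
      toMeasure_apply_singleton _ _ (measurableSet_singleton a), mix_apply, smul_eq_mul]
    exact le_add_self

end PMF

/-- Limitation on distribution-free high-confidence lower bounds on KL
divergence: any such bound `B` computed from `N` samples of `q` (and full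
knowledge of `p`) is at most `ln N` with probability at least `1 - 4δ`. -/
theorem kl_lower_bound_limitation {X : Type*} [Fintype X] [MeasurableSpace X]
    [MeasurableSingletonClass X] (N : ℕ) (hN : 2 ≤ N) (δ : ℝ)
    (hδ : 0 < δ ∧ δ < 1)
    (B : PMF X → Multiset X → ℝ → ℝ)
    (hB : ∀ p q : PMF X, (∀ x, p x ≠ 0) → (∀ x, q x ≠ 0) →
      (Measure.pi fun _ : Fin N => q.toMeasure)
          {s | B p (Multiset.ofList (List.ofFn s)) δ ≤
            ∑ x, (p x).toReal * Real.log ((p x).toReal / (q x).toReal)} ≥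
        ENNReal.ofReal (1 - δ)) :
    ∀ p q : PMF X, (∀ x, p x ≠ 0) → (∀ x, q x ≠ 0) →
      (Measure.pi fun _ : Fin N => q.toMeasure)
          {s | B p (Multiset.ofList (List.ofFn s)) δ ≤ Real.log N} ≥
        ENNReal.ofReal (1 - 4 * δ) := by
  intro p q hp _
  have ht : (N : ℝ≥0∞)⁻¹ ≤ 1 := ENNReal.inv_le_one.2 (by exact_mod_cast by omega)
  have ht0 : (N : ℝ≥0∞)⁻¹ ≠ 0 := ENNReal.inv_ne_zero.2 (ENNReal.natCast_ne_top N)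
  set q' := p.mix _ ht q
  have hKL := p.sum_mul_log_div_mix_le ht q ht0
  rw [ENNReal.toReal_inv, ENNReal.toReal_natCast, inv_inv] at hKL
  set A := {s : Fin N → X | B p (Multiset.ofList (List.ofFn s)) δ ≤ Real.log N}
  have hA : MeasurableSet A := A.toFinite.measurableSet
  have hq'A : Measure.pi (fun _ : Fin N => q'.toMeasure) Aᶜ ≤ ENNReal.ofReal δ :=
    (ofReal_one_sub_le_iff_measure_compl_le hA hδ.1.le).1 <|
      (hB p q' hp fun x => p.mix_ne_zero ht q ht0 (hp x)).trans
        (measure_mono fun s hs => hs.trans hKL)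
  have hcompare : (4 : ℝ≥0∞)⁻¹ • Measure.pi (fun _ : Fin N => q.toMeasure) ≤
      Measure.pi (fun _ : Fin N => q'.toMeasure) := by
    refine (IsOrderedSMul.smul_le_smul_right _ _
      (ENNReal.inv_four_le_one_sub_inv_pow hN) _).trans ?_
    simpa only [Fintype.card_fin] using
      Measure.smul_pi_le_pi fun _ : Fin N => p.smul_toMeasure_le_toMeasure_mix ht q
  have hqA : Measure.pi (fun _ : Fin N => q.toMeasure) Aᶜ ≤ ENNReal.ofReal (4 * δ) := by
    rw [ENNReal.ofReal_mul (by norm_num), ENNReal.ofReal_ofNat,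
      ← ENNReal.inv_mul_le_iff (by norm_num) (by norm_num)]
    exact (hcompare Aᶜ).trans hq'A
  exact (ofReal_one_sub_le_iff_measure_compl_le hA (by linarith [hδ.1])).2 hqA
end

section
/- (Limitation on entropy lower bounds) Let B be any function mapping the type T(S) of an N-element multiset S and δ ∈ (0,1) to a real, such that for every distribution p on a countable set, Pr_{S∼p^N}( H(p) ≥ B(T(S), δ) ) ≥ 1 − δ. Then for N ≥ 50, k ≥ 2, and any distribution p, Pr_{S∼p^N}( B(T(S), δ) ≤ ln(2kN²) ) ≥ 1 − δ − 1.01/k. -/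
/-!
Let `H` be the at most `kN²` values of `p`-probability at least `1/(kN²)`. Off the event that
a value outside `H` is drawn twice, the type of a sample is unchanged when every value outside
`H` is replaced by its position, and the law of the relabelled sample only sees `p` on `H`.
So `p` may be swapped, at the cost of the two collision probabilities, for a `p̃` that agrees
with `p` on `H` and spreads the remaining mass uniformly over `kN²` further values. Since `p̃`
lives on at most `2kN²` points, `H(p̃) ≤ log (2kN²)`, and the guarantee of `B` for `p̃` gives
`B ≤ log (2kN²)` with probability `1 - δ`. A union bound over pairs of positions bounds each
collision probability by `(N²/2) · 1/(kN²) = 1/(2k)`.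
-/

open MeasureTheory

/-- The type of a multiset `S`: `i ↦` the number of distinct elements
occurring exactly `i` times in `S`. -/
def multisetType {X : Type*} [DecidableEq X] (S : Multiset X) : ℕ → ℕ :=
  fun i => (S.toFinset.filter fun x => S.count x = i).card

open scoped ENNReal
open Finset Function Real ProbabilityTheory

theorem Real.sum_negMulLog_le_log_card {ι : Type*} {s : Finset ι} {w : ι → ℝ}
    (hw₀ : ∀ i ∈ s, 0 ≤ w i) (hw₁ : ∑ i ∈ s, w i = 1) :
    ∑ i ∈ s, negMulLog (w i) ≤ log #s := by
  have hs : (0 : ℝ) < #s := by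
    have : s.Nonempty := nonempty_of_sum_ne_zero (by rw [hw₁]; exact one_ne_zero)
    exact_mod_cast this.card_pos
  -- Jensen's inequality for the uniform weights on `s`
  have h := concaveOn_negMulLog.le_map_sum (t := s) (w := fun _ => (#s : ℝ)⁻¹) (p := w)
    (fun _ _ => by positivity) (by simp [hs.ne']) hw₀
  simp only [smul_eq_mul, ← mul_sum, hw₁, mul_one, negMulLog, log_inv] at h
  refine le_of_mul_le_mul_left ?_ (inv_pos.2 hs)
  simpa [negMulLog] using h

namespace PMF

variable {X : Type*}

noncomputable def entropy (p : PMF X) : ℝ := ∑' x, -((p x).toReal * Real.log (p x).toReal)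

theorem entropy_le_log_of_support_subset {p : PMF X} {D : Finset X} (hD : p.support ⊆ D)
    {n : ℕ} (hn : #D ≤ n) : p.entropy ≤ log n := by
  have hzero : ∀ x ∉ D, p x = 0 := fun x hx => (p.apply_eq_zero_iff x).2 fun h => hx (hD h)
  have hsum : ∑ x ∈ D, (p x).toReal = 1 := by
    have : ∑ x ∈ D, p x = 1 := by rw [← p.tsum_coe, tsum_eq_sum hzero]
    rw [← ENNReal.toReal_sum fun x _ => p.apply_ne_top x, this, ENNReal.toReal_one]
  obtain ⟨x, hx⟩ := p.support_nonempty
  have hD₀ : (0 : ℝ) < #D := by exact_mod_cast (Finset.card_pos.2 ⟨x, hD hx⟩)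
  calc p.entropy = ∑ x ∈ D, negMulLog (p x).toReal := by
        rw [entropy, tsum_eq_sum (s := D) fun x hx => by simp [hzero x hx]]
        simp [negMulLog]
    _ ≤ log #D := Real.sum_negMulLog_le_log_card (fun _ _ => ENNReal.toReal_nonneg) hsum
    _ ≤ log n := log_le_log hD₀ (by exact_mod_cast hn)

theorem exists_card_le_forall_notMem_le_inv (p : PMF X) {M : ℕ} (hM : M ≠ 0) :
    ∃ H : Finset X, #H ≤ M ∧ ∀ x ∉ H, p x ≤ (M : ℝ≥0∞)⁻¹ := by
  have hfin : {x | (M : ℝ≥0∞)⁻¹ ≤ p x}.Finite :=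
    ENNReal.finite_const_le_of_tsum_ne_top (by simp) (by simp)
  refine ⟨hfin.toFinset, ?_, fun x hx => (not_le.1 fun h => hx (hfin.mem_toFinset.2 h)).le⟩
  have hmass : (#hfin.toFinset : ℝ≥0∞) / M ≤ 1 :=
    calc (#hfin.toFinset : ℝ≥0∞) / M = ∑ _x ∈ hfin.toFinset, (M : ℝ≥0∞)⁻¹ := by
          rw [sum_const, nsmul_eq_mul, div_eq_mul_inv]
      _ ≤ ∑ x ∈ hfin.toFinset, p x := sum_le_sum fun x hx => (hfin.mem_toFinset.1 hx)
      _ ≤ ∑' x, p x := ENNReal.sum_le_tsum _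
      _ = 1 := p.tsum_coe
  rw [ENNReal.div_le_iff (by simpa) (by simp), one_mul] at hmass
  exact_mod_cast hmass

/-- The paper's adversarial `p̃`: keep every sample in `H`, redraw every other one uniformly
from `T`. -/
noncomputable def resampleOutside [DecidableEq X] (p : PMF X) (H T : Finset X)
    (hT : T.Nonempty) : PMF X :=
  p.bind fun x => if x ∈ H then pure x else uniformOfFinset T hT

section resampleOutside

variable [DecidableEq X] {p : PMF X} {H T : Finset X} {hT : T.Nonempty} {x : X}

theorem resampleOutside_apply_of_mem (hHT : Disjoint H T) (hx : x ∈ H) :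
    p.resampleOutside H T hT x = p x := by
  rw [resampleOutside, bind_apply, tsum_eq_single x]
  · simp [hx]
  · intro y hy
    by_cases hyH : y ∈ H
    · simp [hyH, pure_apply, Ne.symm hy]
    · simp [hyH, uniformOfFinset_apply, disjoint_left.1 hHT hx]

theorem resampleOutside_apply_le (hx : x ∉ H) :
    p.resampleOutside H T hT x ≤ uniformOfFinset T hT x :=
  calc p.resampleOutside H T hT x
      ≤ ∑' y, p y * uniformOfFinset T hT x := by
        rw [resampleOutside, bind_apply]
        refine ENNReal.tsum_le_tsum fun y => mul_le_mul_right ?_ _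
        split_ifs with hy
        · simp [pure_apply, (ne_of_mem_of_not_mem hy hx).symm]
        · rfl
    _ = uniformOfFinset T hT x := by rw [ENNReal.tsum_mul_right, p.tsum_coe, one_mul]

end resampleOutside

theorem exists_eqOn_le_inv_entropy_le_log [DecidableEq X] (p : PMF X) {H : Finset X} {M : ℕ}
    (hM : M ≠ 0) (hH : #H ≤ M) (hpH : ∀ x ∉ H, p x ≤ (M : ℝ≥0∞)⁻¹) :
    ∃ q : PMF X, (∀ x ∈ H, q x = p x) ∧ (∀ x ∉ H, q x ≤ (M : ℝ≥0∞)⁻¹) ∧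
      q.entropy ≤ log (2 * M) := by
  suffices ∃ q : PMF X, (∀ x ∈ H, q x = p x) ∧ (∀ x ∉ H, q x ≤ (M : ℝ≥0∞)⁻¹) ∧
      ∃ D : Finset X, q.support ⊆ D ∧ #D ≤ 2 * M by
    obtain ⟨q, hqp, hqH, D, hD, hDM⟩ := this
    exact ⟨q, hqp, hqH, by exact_mod_cast entropy_le_log_of_support_subset hD hDM⟩
  by_cases hT : ∃ T : Finset X, Disjoint H T ∧ #T = M
  · obtain ⟨T, hHT, rfl⟩ := hT
    have hT₀ : T.Nonempty := card_pos.1 (Nat.pos_of_ne_zero hM)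
    refine ⟨p.resampleOutside H T hT₀, fun x hx => resampleOutside_apply_of_mem hHT hx,
      fun x hx => (resampleOutside_apply_le hx).trans ?_, H ∪ T, fun x hx => ?_,
      (card_union_le H T).trans (by omega)⟩
    · rw [uniformOfFinset_apply]
      split_ifs <;> simp
    · by_contra hxHT
      simp only [coe_union, Set.mem_union, mem_coe, not_or] at hxHT
      refine (p.resampleOutside H T hT₀).apply_eq_zero_iff x |>.1 (le_antisymm ?_ zero_le) hx
      exact (resampleOutside_apply_le hxHT.1).trans_eq
        (uniformOfFinset_apply_of_notMem hT₀ hxHT.2)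
  · -- otherwise `X` is too small to host such a `T`, and `p` itself will do
    have hfin : (H : Set X)ᶜ.Finite := by
      by_contra hinf
      obtain ⟨T, hTH, hTM⟩ := Set.Infinite.exists_subset_card_eq hinf M
      exact hT ⟨T, disjoint_left.2 fun x hxH hxT => hTH hxT hxH, hTM⟩
    have hsmall : #hfin.toFinset < M := by
      by_contra! hle
      obtain ⟨T, hTH, hTM⟩ := exists_subset_card_eq hle
      exact hT ⟨T, disjoint_left.2 fun x hxH hxT => by simpa [hxH] using hTH hxT, hTM⟩
    refine ⟨p, fun _ _ => rfl, hpH, H ∪ hfin.toFinset, fun x _ => ?_,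
      (card_union_le _ _).trans (by omega)⟩
    simp

variable [MeasurableSpace X] [MeasurableSingletonClass X] [Countable X]

theorem toMeasure_apply_eq_of_eqOn {p q : PMF X} {H E : Set X} (hpq : ∀ x ∈ H, p x = q x)
    (hE : E ⊆ H ∨ Hᶜ ⊆ E) : p.toMeasure E = q.toMeasure E := by
  have hsub : ∀ E ⊆ H, p.toMeasure E = q.toMeasure E := fun E hE => by
    rw [toMeasure_apply _ .of_discrete, toMeasure_apply _ .of_discrete]
    refine tsum_congr fun x => ?_
    by_cases hx : x ∈ E
    · simp [hx, hpq x (hE hx)]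
    · simp [hx]
  rcases hE with hE | hE
  · exact hsub E hE
  · rw [← compl_compl E, prob_compl_eq_one_sub (μ := p.toMeasure) .of_discrete,
      prob_compl_eq_one_sub (μ := q.toMeasure) .of_discrete,
      hsub Eᶜ (Set.compl_subset_comm.1 hE)]

theorem pi_preimage_eq_of_fiber_eq {ι Y : Type*} [Fintype ι] [Countable Y] {p q : PMF X}
    (g : ι → X → Y) (hg : ∀ i y, p.toMeasure (g i ⁻¹' {y}) = q.toMeasure (g i ⁻¹' {y}))
    (C : Set (ι → Y)) :
    Measure.pi (fun _ => p.toMeasure) ((fun s i => g i (s i)) ⁻¹' C) =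
      Measure.pi (fun _ => q.toMeasure) ((fun s i => g i (s i)) ⁻¹' C) := by
  have hfiber : ∀ (r : PMF X) (t : ι → Y), Measure.pi (fun _ => r.toMeasure)
      ((fun s i => g i (s i)) ⁻¹' {t}) = ∏ i, r.toMeasure (g i ⁻¹' {t i}) := fun r t => by
    rw [← Measure.pi_pi]
    congr 1
    ext s
    simp [funext_iff]
  rw [← tsum_measure_preimage_singleton C.to_countable fun _ _ => .of_discrete,
    ← tsum_measure_preimage_singleton C.to_countable fun _ _ => .of_discrete]
  simp only [hfiber, hg]

end PMF

theorem multisetType_map {X Y : Type*} [DecidableEq X] [DecidableEq Y] {f : X → Y}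
    (hf : Injective f) (S : Multiset X) : multisetType (S.map f) = multisetType S := by
  funext i
  simp only [multisetType, Multiset.toFinset_map, filter_image, Multiset.count_map_eq_count' f S hf]
  exact card_image_of_injective _ hf

theorem multisetType_ofFn_comp {X Y : Type*} [DecidableEq X] [DecidableEq Y] {N : ℕ}
    {f : X → Y} (hf : Injective f) (s : Fin N → X) :
    multisetType (Multiset.ofList (List.ofFn (f ∘ s))) =
      multisetType (Multiset.ofList (List.ofFn s)) := by
  rw [← List.map_ofFn, ← Multiset.map_coe, multisetType_map hf]

section Tail

variable {X : Type*}

def tailCollisionFree (H : Set X) (N : ℕ) : Set (Fin N → X) :=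
  {s | ∀ i j, s i = s j → s i ∉ H → i = j}

def relabelTail [DecidableEq X] (H : Finset X) {N : ℕ} (s : Fin N → X) : Fin N → X ⊕ Fin N :=
  fun i => if s i ∈ H then .inl (s i) else .inr i

variable [DecidableEq X] {H : Finset X} {N : ℕ}

theorem multisetType_relabelTail {s : Fin N → X} (hs : s ∈ tailCollisionFree (H : Set X) N) :
    multisetType (Multiset.ofList (List.ofFn (relabelTail H s))) =
      multisetType (Multiset.ofList (List.ofFn s)) := by
  classical
  -- `f` sends a value outside `H` to the unique position where it occurs in `s`
  let f : X → X ⊕ Fin N := fun x => if h : ∃ i, s i = x ∧ x ∉ H then .inr h.choose else .inl x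
  have hf : Injective f := by
    intro x y hxy
    simp only [f] at hxy
    split_ifs at hxy with hx hy
    · rw [← hx.choose_spec.1, ← hy.choose_spec.1, Sum.inr_injective hxy]
    · exact Sum.inl_injective hxy
  have hfs : relabelTail H s = f ∘ s := by
    funext i
    by_cases hi : s i ∈ H
    · simp [relabelTail, f, hi]
    · have h : ∃ j, s j = s i ∧ s i ∉ H := ⟨i, rfl, hi⟩
      have hj := h.choose_spec.1
      change (if s i ∈ H then _ else _) = f (s i)
      dsimp only [f]
      rw [if_neg hi, dif_pos h, hs _ _ hj (by rwa [hj])]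
  rw [hfs, multisetType_ofFn_comp hf]

theorem setOf_multisetType_inter_tailCollisionFree (P : (ℕ → ℕ) → Prop) :
    {s : Fin N → X | P (multisetType (Multiset.ofList (List.ofFn s)))} ∩
        tailCollisionFree (H : Set X) N =
      relabelTail H ⁻¹' {t | P (multisetType (Multiset.ofList (List.ofFn t)))} ∩
        tailCollisionFree (H : Set X) N := by
  ext s
  simp only [Set.mem_inter_iff, Set.mem_ofPred_eq, Set.mem_preimage]
  constructor <;> rintro ⟨h, hs⟩ <;> exact ⟨by rwa [multisetType_relabelTail hs] at *, hs⟩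

variable [MeasurableSpace X] [MeasurableSingletonClass X] [Countable X]

theorem PMF.pi_preimage_relabelTail_eq {p q : PMF X} (hpq : ∀ x ∈ H, p x = q x)
    (C : Set (Fin N → X ⊕ Fin N)) :
    Measure.pi (fun _ => p.toMeasure) (relabelTail H ⁻¹' C) =
      Measure.pi (fun _ => q.toMeasure) (relabelTail H ⁻¹' C) := by
  refine PMF.pi_preimage_eq_of_fiber_eq (fun i x => if x ∈ H then .inl x else .inr i)
    (fun i y => PMF.toMeasure_apply_eq_of_eqOn (H := H) hpq ?_) C
  -- a fiber of the `i`-th coordinate map is `Hᶜ` or lies inside `H`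
  by_cases hy : y = .inr i
  · right
    intro x hx
    simp_all
  · left
    intro x hx
    by_contra hxH
    rw [Set.mem_preimage, Set.mem_singleton_iff, if_neg (show x ∉ H from hxH)] at hx
    exact hy hx.symm

end Tail

section Collision

variable {X : Type*} [MeasurableSpace X] [MeasurableSingletonClass X] [Countable X]
  {p : PMF X} {H : Set X} {ε : ℝ≥0∞}

theorem PMF.measure_pi_eq_notMem_le {ι : Type*} [Fintype ι] (hp : ∀ x ∉ H, p x ≤ ε) {i j : ι}
    (hij : i ≠ j) : Measure.pi (fun _ => p.toMeasure) {s | s i = s j ∧ s j ∉ H} ≤ ε := by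
  set μ := Measure.pi fun _ : ι => p.toMeasure
  have hind : IndepFun (fun s : ι → X => s i) (fun s => s j) μ :=
    (iIndepFun_pi (X := fun _ => id) fun _ => aemeasurable_id).indepFun hij
  have hcoord : ∀ l (x : X), μ ((fun s => s l) ⁻¹' {x}) = p x := fun l x => by
    rw [(measurePreserving_eval (fun _ => p.toMeasure) l).measure_preimage
      (measurableSet_singleton x).nullMeasurableSet,
      toMeasure_apply_singleton _ _ .of_discrete]
  calc μ {s | s i = s j ∧ s j ∉ H}
      ≤ μ (⋃ x : ↥Hᶜ, (fun s => s i) ⁻¹' {↑x} ∩ (fun s => s j) ⁻¹' {↑x}) :=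
        measure_mono fun s hs => Set.mem_iUnion.2 ⟨⟨s j, hs.2⟩, hs.1, rfl⟩
    _ ≤ ∑' x : ↥Hᶜ, p x * p x := (measure_iUnion_le _).trans <| ENNReal.tsum_le_tsum fun x => by
        rw [hind.measure_inter_preimage_eq_mul _ _ .of_discrete .of_discrete, hcoord, hcoord]
    _ ≤ ∑' x : ↥Hᶜ, ε * p x := ENNReal.tsum_le_tsum fun x => mul_le_mul_left (hp x x.2) _
    _ ≤ ε := by
        rw [ENNReal.tsum_mul_left]
        refine mul_le_of_le_one_right' ?_
        exact (ENNReal.tsum_comp_le_tsum_of_injective Subtype.val_injective p).trans_eq p.tsum_coe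

theorem PMF.measure_pi_compl_tailCollisionFree_le {N : ℕ} (hp : ∀ x ∉ H, p x ≤ ε) :
    Measure.pi (fun _ : Fin N => p.toMeasure) (tailCollisionFree H N)ᶜ ≤ N ^ 2 * ε / 2 := by
  set μ := Measure.pi fun _ : Fin N => p.toMeasure
  have hsub : (tailCollisionFree H N)ᶜ ⊆ ⋃ j, ⋃ i ∈ Iio j, {s | s i = s j ∧ s j ∉ H} := by
    intro s hs
    simp only [tailCollisionFree, Set.mem_compl_iff, Set.mem_ofPred_eq, not_forall] at hs
    obtain ⟨i, j, hij, hi, hne⟩ := hs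
    simp only [Set.mem_iUnion, mem_Iio, exists_prop, Set.mem_ofPred_eq]
    rcases lt_or_gt_of_ne hne with h | h
    · exact ⟨j, i, h, hij, hij ▸ hi⟩
    · exact ⟨i, j, h, hij.symm, hi⟩
  have hpairs : (∑ j : Fin N, (j : ℕ)) * 2 ≤ N ^ 2 := by
    rw [Fin.sum_univ_eq_sum_range (fun j => j), sum_range_id_mul_two, sq]
    exact Nat.mul_le_mul_left _ (Nat.sub_le _ _)
  calc μ (tailCollisionFree H N)ᶜ
      ≤ ∑ j, ∑ i ∈ Iio j, μ {s | s i = s j ∧ s j ∉ H} :=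
        (measure_mono hsub).trans <| (measure_iUnion_fintype_le _ _).trans <|
          sum_le_sum fun j _ => measure_biUnion_finset_le _ _
    _ ≤ ∑ j : Fin N, ((j : ℕ) : ℝ≥0∞) * ε := sum_le_sum fun j _ => by
        refine (sum_le_sum fun i hi => p.measure_pi_eq_notMem_le hp (mem_Iio.1 hi).ne).trans ?_
        rw [sum_const, Fin.card_Iio, nsmul_eq_mul]
    _ ≤ N ^ 2 * ε / 2 := by
        rw [← sum_mul, ENNReal.le_div_iff_mul_le (by simp) (by simp), mul_right_comm]
        gcongr
        exact_mod_cast hpairs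

end Collision

theorem MeasureTheory.measure_le_add_of_inter_eq {α : Type*} [MeasurableSpace α]
    {μ ν : Measure α} {A E G : Set α} (hAE : A ∩ G = E ∩ G) (hE : ν E = μ E) :
    ν A ≤ μ A + μ Gᶜ + ν Gᶜ := by
  have hsplit : ∀ (ρ : Measure α) (S : Set α), ρ S ≤ ρ (S ∩ G) + ρ Gᶜ := fun ρ S =>
    (measure_le_inter_add_sdiff ρ S G).trans (by gcongr; exact Set.sdiff_subset_compl S G)
  calc ν A ≤ ν (A ∩ G) + ν Gᶜ := hsplit ν A
    _ ≤ μ E + ν Gᶜ := by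
        rw [← hE, hAE]
        gcongr
        exact Set.inter_subset_left
    _ ≤ μ A + μ Gᶜ + ν Gᶜ := by
        gcongr
        refine (hsplit μ E).trans ?_
        gcongr
        rw [← hAE]
        exact Set.inter_subset_left

theorem entropy_lower_bound_limitation_general {X : Type*} [Countable X]
    [DecidableEq X] [MeasurableSpace X] [MeasurableSingletonClass X]
    (N k : ℕ) (hN : 50 ≤ N) (hk : 2 ≤ k) (δ : ℝ)
    (B : (ℕ → ℕ) → ℝ → ℝ)
    (hB : ∀ p : PMF X,
      (Measure.pi fun _ : Fin N => p.toMeasure)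
          {s | B (multisetType (Multiset.ofList (List.ofFn s))) δ ≤
            ∑' x, -((p x).toReal * Real.log (p x).toReal)} ≥
        ENNReal.ofReal (1 - δ)) :
    ∀ p : PMF X,
      (Measure.pi fun _ : Fin N => p.toMeasure)
          {s | B (multisetType (Multiset.ofList (List.ofFn s))) δ ≤
            Real.log (2 * k * N ^ 2)} ≥
        ENNReal.ofReal (1 - δ - 1.01 / k) := by
  intro p
  have hM : k * N ^ 2 ≠ 0 := by positivity
  obtain ⟨H, hHM, hpH⟩ := p.exists_card_le_forall_notMem_le_inv hM
  obtain ⟨q, hqp, hqH, hq⟩ := p.exists_eqOn_le_inv_entropy_le_log hM hHM hpH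
  set A := {s : Fin N → X | B (multisetType (Multiset.ofList (List.ofFn s))) δ ≤
    Real.log (2 * k * N ^ 2)}
  set G := tailCollisionFree (H : Set X) N
  have hqA : ENNReal.ofReal (1 - δ) ≤ Measure.pi (fun _ => q.toMeasure) A :=
    (hB q).trans <| measure_mono fun s hs =>
      hs.trans <| hq.trans_eq (by rw [Nat.cast_mul, Nat.cast_pow, mul_assoc])
  have hcoupling := measure_le_add_of_inter_eq
    (setOf_multisetType_inter_tailCollisionFree (H := H) (N := N)
      fun τ => B τ δ ≤ log (2 * k * N ^ 2))
    (PMF.pi_preimage_relabelTail_eq hqp _)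
  have hcollision : Measure.pi (fun _ => p.toMeasure) Gᶜ + Measure.pi (fun _ => q.toMeasure) Gᶜ
      ≤ ENNReal.ofReal (1 / k) := by
    refine (add_le_add (p.measure_pi_compl_tailCollisionFree_le hpH)
      (q.measure_pi_compl_tailCollisionFree_le hqH)).trans_eq ?_
    rw [ENNReal.add_halves, Nat.cast_mul, Nat.cast_pow, ENNReal.mul_inv (by simp) (by simp),
      mul_left_comm, ENNReal.mul_inv_cancel (by simp; omega) (by simp), mul_one, one_div,
      ENNReal.ofReal_inv_of_pos (by exact_mod_cast (by omega : 0 < k)), ENNReal.ofReal_natCast]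
  calc ENNReal.ofReal (1 - δ - 1.01 / k) ≤ ENNReal.ofReal (1 - δ) - ENNReal.ofReal (1 / k) := by
        rw [← ENNReal.ofReal_sub _ (by positivity)]
        gcongr
        norm_num
    _ ≤ Measure.pi (fun _ => p.toMeasure) A := by
        rw [tsub_le_iff_right]
        exact hqA.trans (hcoupling.trans (by rw [add_assoc]; gcongr))

/-- Limitation on distribution-free high-confidence lower bounds on entropy:
any such bound `B` computed from the type of `N` samples is at most
`ln (2kN²)` with probability at least `1 - δ - 1.01/k`. -/
theorem entropy_lower_bound_limitation {X : Type*} [Countable X]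
    [DecidableEq X] [MeasurableSpace X] [MeasurableSingletonClass X]
    (N k : ℕ) (hN : 50 ≤ N) (hk : 2 ≤ k) (δ : ℝ) (hδ : 0 < δ ∧ δ < 1)
    (B : (ℕ → ℕ) → ℝ → ℝ)
    (hB : ∀ p : PMF X,
      (Measure.pi fun _ : Fin N => p.toMeasure)
          {s | B (multisetType (Multiset.ofList (List.ofFn s))) δ ≤
            ∑' x, -((p x).toReal * Real.log (p x).toReal)} ≥
        ENNReal.ofReal (1 - δ)) :
    ∀ p : PMF X,
      (Measure.pi fun _ : Fin N => p.toMeasure)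
          {s | B (multisetType (Multiset.ofList (List.ofFn s))) δ ≤
            Real.log (2 * k * N ^ 2)} ≥
        ENNReal.ofReal (1 - δ - 1.01 / k) :=
  entropy_lower_bound_limitation_general N k hN hk δ B hB
end

section
/- (Main theorem: limitation on mutual information lower bounds) Let B map N samples of a pair (X,Y) to a real such that for every joint distribution p on (X,Y) over countable spaces, Pr_{((x₁,y₁),…,(x_N,y_N))∼p^N}( I(X;Y;p) ≥ B((x₁,y₁),…,(x_N,y_N)) ) ≥ 0.99. Then for any joint distribution q and N ≥ 50, with probability at least 0.96 over N i.i.d. samples from q, B((x′₁,y′₁),…,(x′_N,y′_N)) ≤ 2 ln N + 5. -/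
open MeasureTheory

/-- Mutual information of a joint distribution `p` on a countable product
space, in nats. -/
noncomputable def mutualInfo {X Y : Type*} (p : PMF (X × Y)) : ℝ :=
  ∑' z : X × Y, (p z).toReal *
    Real.log ((p z).toReal /
      ((p.map Prod.fst z.1).toReal * (p.map Prod.snd z.2).toReal))

open ENNReal

lemma mutualInfo_map_uniform_le {X Y : Type*} (m : ℕ) [Nonempty (Fin m)] (hm : 0 < m)
    (S : Fin m → X × Y) :
    mutualInfo (PMF.map S (PMF.uniformOfFintype (Fin m))) ≤ Real.log m := by
  classical
  set u := PMF.uniformOfFintype (Fin m) with hu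
  set p := PMF.map S u with hp
  have hrange : ∀ z, p z ≠ 0 → z ∈ Set.range S := by
    intro z hz
    rw [hp, PMF.map_apply, Ne, ENNReal.tsum_eq_zero, not_forall] at hz
    rcases hz with ⟨i, hi⟩
    by_cases h : z = S i
    · exact ⟨i, h.symm⟩
    · simp [h] at hi
  have key1 : ∀ z, p z ≠ 0 → ((m : ℝ≥0∞))⁻¹ ≤ p z := by
    intro z hz
    rcases hrange z hz with ⟨i, hi⟩
    rw [hp, PMF.map_apply]
    have := ENNReal.le_tsum (f := fun a => if z = S a then u a else 0) i
    simpa [hi.symm, hu, PMF.uniformOfFintype_apply] using this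
  have key2a : ∀ z : X × Y, p z ≤ p.map Prod.fst z.1 := by
    intro z
    conv_rhs => rw [PMF.map_apply]
    have := ENNReal.le_tsum (f := fun w => if z.1 = w.1 then p w else 0) z
    simpa using this
  have key2b : ∀ z : X × Y, p z ≤ p.map Prod.snd z.2 := by
    intro z
    conv_rhs => rw [PMF.map_apply]
    have := ENNReal.le_tsum (f := fun w => if z.2 = w.2 then p w else 0) z
    simpa using this
  set F : X × Y → ℝ := fun z => (p z).toReal *
    Real.log ((p z).toReal /
      ((p.map Prod.fst z.1).toReal * (p.map Prod.snd z.2).toReal)) with hF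
  set G : X × Y → ℝ := fun z => (p z).toReal * Real.log m with hG
  have hFG : ∀ z, F z ≤ G z := by
    intro z
    by_cases h : p z = 0
    · simp [hF, hG, h]
    · have haz : 0 < (p z).toReal := ENNReal.toReal_pos h (p.apply_ne_top z)
      have hb : (p z).toReal ≤ (p.map Prod.fst z.1).toReal :=
        ENNReal.toReal_mono ((p.map Prod.fst).apply_ne_top z.1) (key2a z)
      have hc : (p z).toReal ≤ (p.map Prod.snd z.2).toReal :=
        ENNReal.toReal_mono ((p.map Prod.snd).apply_ne_top z.2) (key2b z)
      have hminv : ((m : ℝ))⁻¹ ≤ (p z).toReal := by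
        have := ENNReal.toReal_mono (p.apply_ne_top z) (key1 z h)
        simpa using this
      have hm0 : (0:ℝ) < m := by exact_mod_cast hm
      have hbpos : 0 < (p.map Prod.fst z.1).toReal := lt_of_lt_of_le haz hb
      have hcpos : 0 < (p.map Prod.snd z.2).toReal := lt_of_lt_of_le haz hc
      have hratio : (p z).toReal /
          ((p.map Prod.fst z.1).toReal * (p.map Prod.snd z.2).toReal) ≤ (m:ℝ) := by
        have h1 : (p z).toReal * (p z).toReal ≤
            (p.map Prod.fst z.1).toReal * (p.map Prod.snd z.2).toReal := by
          exact mul_le_mul hb hc haz.le hbpos.le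
        have h2 : (p z).toReal /
            ((p.map Prod.fst z.1).toReal * (p.map Prod.snd z.2).toReal) ≤
            (p z).toReal / ((p z).toReal * (p z).toReal) :=
          div_le_div_of_nonneg_left haz.le (by positivity) h1
        have h3 : (p z).toReal / ((p z).toReal * (p z).toReal) = ((p z).toReal)⁻¹ := by
          field_simp
        rw [h3] at h2
        refine h2.trans ?_
        rw [inv_le_comm₀ haz hm0] at *
        · exact_mod_cast hminv
      have hratpos : 0 < (p z).toReal /
          ((p.map Prod.fst z.1).toReal * (p.map Prod.snd z.2).toReal) := by positivity
      have := Real.log_le_log hratpos hratio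
      exact mul_le_mul_of_nonneg_left this haz.le
  have hsumF : Summable F := by
    apply summable_of_ne_finset_zero (s := (Set.finite_range S).toFinset)
    intro z hz
    have : p z = 0 := by
      by_contra h
      exact hz (by simpa using hrange z h)
    simp [hF, this]
  have hsumP : Summable (fun z => (p z).toReal) :=
    ENNReal.summable_toReal (by rw [p.tsum_coe]; exact ENNReal.one_ne_top)
  have hsumG : Summable G := hsumP.mul_right _
  have : mutualInfo p ≤ ∑' z, G z := Summable.tsum_le_tsum hFG hsumF hsumG
  refine this.trans (le_of_eq ?_)
  rw [hG, tsum_mul_right]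
  have : ∑' z, (p z).toReal = 1 := by
    rw [← ENNReal.tsum_toReal_eq (fun z => p.apply_ne_top z)]
    simp [p.tsum_coe]
  rw [this, one_mul]


lemma meas_all {β : Type*} [MeasurableSpace β] [MeasurableSingletonClass β]
    [Countable β] (s : Set β) : MeasurableSet s := s.to_countable.measurableSet

lemma map_precomp_pi {α : Type*} [MeasurableSpace α] [MeasurableSingletonClass α]
    [Countable α] {n m : ℕ} (q : PMF α) (ι : Fin n → Fin m) (hι : Function.Injective ι) :
    Measure.map (fun (S : Fin m → α) (j : Fin n) => S (ι j))
        (Measure.pi fun _ : Fin m => q.toMeasure)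
      = Measure.pi (fun _ : Fin n => q.toMeasure) := by
  classical
  refine (Measure.pi_eq fun s hs => ?_).symm
  set t : Fin m → Set α := fun i => if h : ∃ j, ι j = i then s h.choose else Set.univ with ht
  have htι : ∀ j, t (ι j) = s j := by
    intro j
    have h : ∃ j', ι j' = ι j := ⟨j, rfl⟩
    have hj : h.choose = j := hι h.choose_spec
    simp [ht, dif_pos h, hj]
  have hmeas : Measurable (fun (S : Fin m → α) (j : Fin n) => S (ι j)) :=
    measurable_pi_lambda _ fun j => measurable_pi_apply _
  rw [Measure.map_apply hmeas (MeasurableSet.univ_pi hs)]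
  have hpre : (fun (S : Fin m → α) (j : Fin n) => S (ι j)) ⁻¹' Set.pi Set.univ s
      = Set.pi Set.univ t := by
    ext S
    simp only [Set.mem_preimage, Set.mem_pi, Set.mem_univ, forall_true_left, true_implies]
    constructor
    · intro h i
      by_cases hex : ∃ j, ι j = i
      · have h1 : t i = s hex.choose := dif_pos hex
        have h2 := h hex.choose
        rw [hex.choose_spec] at h2
        exact h1 ▸ h2
      · simp [ht, dif_neg hex]
    · intro h j
      have := h (ι j)
      rwa [htι j] at this
  rw [hpre, Measure.pi_pi]
  calc (∏ i : Fin m, q.toMeasure (t i))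
      = ∏ i ∈ Finset.image ι Finset.univ, q.toMeasure (t i) := by
        refine (Finset.prod_subset (Finset.subset_univ _) ?_).symm
        intro i _ hi
        have hex : ¬ ∃ j, ι j = i := by simpa using hi
        simp [ht, dif_neg hex]
    _ = ∏ j : Fin n, q.toMeasure (t (ι j)) :=
        Finset.prod_image (fun a _ b _ h => hι h)
    _ = ∏ j : Fin n, q.toMeasure (s j) := by
        refine Finset.prod_congr rfl fun j _ => by rw [htι j]



lemma collision_bound (N m : ℕ) [Nonempty (Fin m)] :
    (Measure.pi fun _ : Fin N => (PMF.uniformOfFintype (Fin m)).toMeasure)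
      {i | ¬ Function.Injective i} ≤ (N : ℝ≥0∞) * N * (m : ℝ≥0∞)⁻¹ := by
  classical
  set u := PMF.uniformOfFintype (Fin m) with hu
  set ν := Measure.pi fun _ : Fin N => u.toMeasure with hν
  have husing : ∀ v : Fin m, u.toMeasure {v} = (m : ℝ≥0∞)⁻¹ := by
    intro v
    rw [PMF.toMeasure_apply_singleton _ _ (measurableSet_singleton v)]
    simp [hu, PMF.uniformOfFintype_apply]
  have hpair : ∀ (j j' : Fin N), j ≠ j' → ν {i | i j = i j'} ≤ (m : ℝ≥0∞)⁻¹ := by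
    intro j j' hjj
    set c : Fin m → Fin N → Set (Fin m) :=
      fun v k => if k = j then {v} else if k = j' then {v} else Set.univ with hc
    have hsub : {i : Fin N → Fin m | i j = i j'} ⊆ ⋃ v : Fin m, Set.pi Set.univ (c v) := by
      intro i hi
      refine Set.mem_iUnion.mpr ⟨i j, ?_⟩
      intro k _
      by_cases h1 : k = j
      · simp [hc, h1]
      · by_cases h2 : k = j'
        · have : i j = i j' := hi
          simp [hc, h1, h2, this.symm]
        · simp [hc, h1, h2]
    refine le_trans (measure_mono hsub) (le_trans (measure_iUnion_le _) ?_)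
    have hterm : ∀ v : Fin m, ν (Set.pi Set.univ (c v)) = (m : ℝ≥0∞)⁻¹ * (m : ℝ≥0∞)⁻¹ := by
      intro v
      rw [hν, Measure.pi_pi]
      have : ∀ k : Fin N, u.toMeasure (c v k)
          = if k = j then (m : ℝ≥0∞)⁻¹ else if k = j' then (m : ℝ≥0∞)⁻¹ else 1 := by
        intro k
        by_cases h1 : k = j
        · simp [hc, h1, husing]
        · by_cases h2 : k = j'
          · simp [hc, h1, h2, husing]
          · simp [hc, h1, h2]
      simp_rw [this]
      rw [← Finset.prod_subset (Finset.subset_univ ({j, j'} : Finset (Fin N)))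
        (by intro k _ hk
            simp only [Finset.mem_insert, Finset.mem_singleton, not_or] at hk
            simp [hk.1, hk.2])]
      rw [Finset.prod_pair hjj]
      simp [hjj, Ne.symm hjj]
    calc (∑' v : Fin m, ν (Set.pi Set.univ (c v)))
        = ∑' _ : Fin m, (m : ℝ≥0∞)⁻¹ * (m : ℝ≥0∞)⁻¹ := by simp_rw [hterm]
      _ = (m : ℝ≥0∞) * ((m : ℝ≥0∞)⁻¹ * (m : ℝ≥0∞)⁻¹) := by
          rw [tsum_fintype]
          simp [Finset.card_univ, mul_comm]
      _ ≤ (m : ℝ≥0∞)⁻¹ := by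
          have hm0 : (m : ℝ≥0∞) ≠ 0 := by
            have : 0 < m := Fin.pos (Classical.arbitrary (Fin m))
            exact_mod_cast this.ne'
          rw [← mul_assoc, ENNReal.mul_inv_cancel hm0 (natCast_ne_top m), one_mul]
  have hsub2 : {i : Fin N → Fin m | ¬ Function.Injective i} ⊆
      ⋃ pr : Fin N × Fin N,
        (if pr.1 ≠ pr.2 then {i : Fin N → Fin m | i pr.1 = i pr.2} else ∅) := by
    intro i hi
    obtain ⟨j, j', h1, h2⟩ := Function.not_injective_iff.mp hi
    refine Set.mem_iUnion.mpr ⟨(j, j'), ?_⟩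
    simp only [ne_eq, h2, not_false_iff, if_true]
    exact h1
  refine le_trans (measure_mono hsub2) (le_trans (measure_iUnion_le _) ?_)
  have hbound : ∀ pr : Fin N × Fin N,
      ν (if pr.1 ≠ pr.2 then {i : Fin N → Fin m | i pr.1 = i pr.2} else ∅)
        ≤ (m : ℝ≥0∞)⁻¹ := by
    intro pr
    by_cases h : pr.1 ≠ pr.2
    · rw [if_pos h]; exact hpair _ _ h
    · rw [if_neg h]; simp
  calc (∑' pr : Fin N × Fin N, ν (if pr.1 ≠ pr.2 then {i | i pr.1 = i pr.2} else ∅))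
      ≤ ∑' _ : Fin N × Fin N, (m : ℝ≥0∞)⁻¹ := ENNReal.tsum_le_tsum hbound
    _ = (N : ℝ≥0∞) * N * (m : ℝ≥0∞)⁻¹ := by
        rw [tsum_fintype]
        simp [Finset.card_univ, mul_assoc, mul_comm]


/-- Main theorem: any distribution-free 99%-confidence lower bound `B` on
mutual information computed from `N ≥ 50` samples is at most `2 ln N + 5`
with probability at least 0.96. -/
theorem mi_lower_bound_limitation {X Y : Type*} [Countable X] [Countable Y]
    [MeasurableSpace X] [MeasurableSingletonClass X]
    [MeasurableSpace Y] [MeasurableSingletonClass Y]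
    (N : ℕ) (hN : 50 ≤ N)
    (B : (Fin N → X × Y) → ℝ)
    (hB : ∀ p : PMF (X × Y),
      (Measure.pi fun _ : Fin N => p.toMeasure)
          {s | B s ≤ mutualInfo p} ≥ ENNReal.ofReal 0.99) :
    ∀ q : PMF (X × Y),
      (Measure.pi fun _ : Fin N => q.toMeasure)
          {s | B s ≤ 2 * Real.log N + 5} ≥ ENNReal.ofReal 0.96 := by
  classical
  intro q
  have hN0 : 0 < N := lt_of_lt_of_le (by norm_num) hN
  set m := 50 * N ^ 2 with hm
  have hm0 : 0 < m := by positivity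
  haveI : Nonempty (Fin m) := ⟨⟨0, hm0⟩⟩
  set u := PMF.uniformOfFintype (Fin m) with hudef
  set μ := Measure.pi (fun _ : Fin m => q.toMeasure) with hμdef
  set ν := Measure.pi (fun _ : Fin N => u.toMeasure) with hνdef
  set qN := Measure.pi (fun _ : Fin N => q.toMeasure) with hqNdef
  set A : Set (Fin N → X × Y) := {s | B s ≤ Real.log m} with hA
  set T : (Fin m → X × Y) × (Fin N → Fin m) → (Fin N → X × Y) :=
    fun Si j => Si.1 (Si.2 j) with hT
  -- lower bound on the probability of `T ⁻¹' A`
  have hlow : ENNReal.ofReal 0.99 ≤ (μ.prod ν) (T ⁻¹' A) := by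
    rw [Measure.prod_apply (meas_all _)]
    have hint : ∀ S : Fin m → X × Y,
        ENNReal.ofReal 0.99 ≤ ν (Prod.mk S ⁻¹' (T ⁻¹' A)) := by
      intro S
      have hSm : Measurable S := measurable_of_countable S
      have hmp : MeasurePreserving (fun (i : Fin N → Fin m) (j : Fin N) => S (i j)) ν
          (Measure.pi fun _ : Fin N => (u.map S).toMeasure) := by
        refine measurePreserving_pi _ _ fun j => ⟨hSm, PMF.toMeasure_map (f := S) u hSm⟩
      have heq : Prod.mk S ⁻¹' (T ⁻¹' A)
          = (fun (i : Fin N → Fin m) (j : Fin N) => S (i j)) ⁻¹' A := rfl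
      rw [heq, ← Measure.map_apply hmp.measurable (meas_all _), hmp.map_eq]
      refine le_trans (hB (u.map S)) (measure_mono ?_)
      intro s hs
      exact le_trans hs (mutualInfo_map_uniform_le m hm0 S)
    calc ENNReal.ofReal 0.99 = ∫⁻ _, ENNReal.ofReal 0.99 ∂μ := by
          rw [lintegral_const, measure_univ, mul_one]
      _ ≤ ∫⁻ S, ν (Prod.mk S ⁻¹' (T ⁻¹' A)) ∂μ := lintegral_mono hint
  -- upper bound
  have hup : (μ.prod ν) (T ⁻¹' A) ≤ qN A + (N : ℝ≥0∞) * N * (m : ℝ≥0∞)⁻¹ := by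
    have hsplit : T ⁻¹' A ⊆ (T ⁻¹' A ∩ {Si | Function.Injective Si.2})
        ∪ {Si : (Fin m → X × Y) × (Fin N → Fin m) | ¬ Function.Injective Si.2} := by
      intro x hx
      by_cases h : Function.Injective x.2
      · exact Or.inl ⟨hx, h⟩
      · exact Or.inr h
    refine le_trans (measure_mono hsplit) (le_trans (measure_union_le _ _) ?_)
    have h1 : (μ.prod ν) (T ⁻¹' A ∩ {Si | Function.Injective Si.2}) ≤ qN A := by
      rw [Measure.prod_apply_symm (meas_all _)]
      have hib : ∀ i : Fin N → Fin m,
          μ ((fun S => (S, i)) ⁻¹' (T ⁻¹' A ∩ {Si | Function.Injective Si.2})) ≤ qN A := by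
        intro i
        by_cases hi : Function.Injective i
        · have heq : ((fun S => (S, i)) ⁻¹' (T ⁻¹' A ∩ {Si | Function.Injective Si.2}))
              = (fun (S : Fin m → X × Y) (j : Fin N) => S (i j)) ⁻¹' A := by
            ext S
            simp [hT, hi]
          have hmeas2 : Measurable (fun (S : Fin m → X × Y) (j : Fin N) => S (i j)) :=
            measurable_pi_lambda _ fun j => measurable_pi_apply _
          rw [heq, ← Measure.map_apply hmeas2 (meas_all _), hμdef, map_precomp_pi q i hi]
        · have heq : ((fun S => (S, i)) ⁻¹' (T ⁻¹' A ∩ {Si | Function.Injective Si.2}))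
              = (∅ : Set (Fin m → X × Y)) := by
            ext S
            simp [hi]
          rw [heq]
          simp
      calc (∫⁻ i, μ ((fun S => (S, i)) ⁻¹' (T ⁻¹' A ∩ {Si | Function.Injective Si.2})) ∂ν)
          ≤ ∫⁻ _, qN A ∂ν := lintegral_mono hib
        _ = qN A := by rw [lintegral_const, measure_univ, mul_one]
    have h2 : (μ.prod ν) {Si : (Fin m → X × Y) × (Fin N → Fin m) | ¬ Function.Injective Si.2}
        ≤ (N : ℝ≥0∞) * N * (m : ℝ≥0∞)⁻¹ := by
      have heq : {Si : (Fin m → X × Y) × (Fin N → Fin m) | ¬ Function.Injective Si.2}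
          = Set.univ ×ˢ {i | ¬ Function.Injective i} := by
        ext x
        simp [Set.mem_prod]
      rw [heq, Measure.prod_prod, measure_univ, one_mul, hνdef, hudef]
      exact collision_bound N m
    exact add_le_add h1 h2
  -- collision probability equals 1/50
  have hNne : (N : ℝ≥0∞) ≠ 0 := by exact_mod_cast hN0.ne'
  have hNnetop : (N : ℝ≥0∞) ≠ ⊤ := natCast_ne_top N
  have hcol : (N : ℝ≥0∞) * N * (m : ℝ≥0∞)⁻¹ = (50 : ℝ≥0∞)⁻¹ := by
    have hmcast : (m : ℝ≥0∞) = 50 * ((N : ℝ≥0∞) * N) := by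
      rw [hm]
      push_cast
      ring
    rw [hmcast, ENNReal.mul_inv (Or.inl (by norm_num)) (Or.inl (by norm_num)),
      mul_comm ((N : ℝ≥0∞) * N), mul_assoc,
      ENNReal.inv_mul_cancel (mul_ne_zero hNne hNne) (ENNReal.mul_ne_top hNnetop hNnetop), mul_one]
  -- log bound
  have hlog : Real.log m ≤ 2 * Real.log N + 5 := by
    have hmr : (m : ℝ) = 50 * (N : ℝ) ^ 2 := by
      rw [hm]
      push_cast
      ring
    have hNr : (0:ℝ) < (N:ℝ) := by exact_mod_cast hN0
    rw [hmr, Real.log_mul (by norm_num) (by positivity), Real.log_pow]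
    have h50 : Real.log 50 ≤ 5 := by
      have h1 : Real.log 50 ≤ Real.log (2 ^ 6) :=
        Real.log_le_log (by norm_num) (by norm_num)
      rw [Real.log_pow] at h1
      have h2 := Real.log_two_lt_d9
      push_cast at h1
      nlinarith
    push_cast
    linarith
  have hAsub : A ⊆ {s | B s ≤ 2 * Real.log N + 5} := fun s hs => le_trans hs hlog
  have h99 : ENNReal.ofReal 0.99 ≤ qN {s | B s ≤ 2 * Real.log N + 5} + (50 : ℝ≥0∞)⁻¹ := by
    refine hlow.trans (hup.trans ?_)
    rw [hcol]
    exact add_le_add (measure_mono hAsub) le_rfl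
  have hkey : ENNReal.ofReal 0.96 + (50 : ℝ≥0∞)⁻¹ ≤ ENNReal.ofReal 0.99 := by
    have h02 : (50 : ℝ≥0∞)⁻¹ = ENNReal.ofReal 0.02 := by
      rw [show (0.02 : ℝ) = (50 : ℝ)⁻¹ by norm_num,
        ENNReal.ofReal_inv_of_pos (by norm_num)]
      norm_num
    rw [h02, ← ENNReal.ofReal_add (by norm_num) (by norm_num)]
    exact ENNReal.ofReal_le_ofReal (by norm_num)
  have hfinal := hkey.trans h99
  exact (ENNReal.add_le_add_iff_right (by simp : ((50 : ℝ≥0∞)⁻¹ ≠ ⊤))).mp hfinal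
end
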